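/- arXiv:1402.7235 — 2 statements merged into one kernel-verified Lean document; each statement's English description precedes it below -/
import Mathlib

section
/- Let n, m ≥ 2 and let ℓ ≥ 1 be odd. Then the number of ℓ-links of the complete bipartite graph K_{n,m} is n·m·((n−1)(m−1))^{(ℓ−1)/2}, and every ℓ-link can be extended in exactly n+m−2 ways to an (ℓ+1)-link having it as its initial segment or final segment; consequently the ℓ-link graph of K_{n,m} is (n+m−2)-regular. -/
/-- A multigraph: a type of vertices, a type of edges, and an incidence map
sending each edge to an unordered pair of vertices. -/
structure Multigraph (V E : Type) where
  inc : E → Sym2 V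

namespace Multigraph

variable {V E : Type}

/-- A multigraph is loopless if no edge joins a vertex to itself. -/
def Loopless (G : Multigraph V E) : Prop := ∀ e : E, ¬ (G.inc e).IsDiag

/-- A multigraph is simple if it is loopless and has no parallel edges. -/
def Simple (G : Multigraph V E) : Prop := G.Loopless ∧ Function.Injective G.inc

/-- The underlying simple graph of a multigraph. -/
def toSimple (G : Multigraph V E) : SimpleGraph V where
  Adj u v := u ≠ v ∧ ∃ e : E, G.inc e = s(u, v)
  symm := by
    refine ⟨?_⟩
    rintro u v ⟨huv, e, he⟩
    exact ⟨Ne.symm huv, e, by rw [he, Sym2.eq_swap]⟩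
  loopless := by refine ⟨?_⟩; rintro v ⟨h, _⟩; exact h rfl

/-- The degree of a vertex: the number of edges incident to it. -/
noncomputable def degree (G : Multigraph V E) (v : V) : ℕ := Nat.card {e : E // v ∈ G.inc e}

/-- The number of edges of a multigraph. -/
noncomputable def edgeCard (_G : Multigraph V E) : ℕ := Nat.card E

/-- An `ℓ`-arc (non-backtracking walk of length `ℓ`): an alternating sequence of
vertices and edges with consecutive edges distinct. -/
@[ext]
structure Arc (G : Multigraph V E) (ℓ : ℕ) where
  verts : Fin (ℓ + 1) → V
  edges : Fin ℓ → E
  inc_eq : ∀ i : Fin ℓ, G.inc (edges i) = s(verts i.castSucc, verts i.succ)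
  nb : ∀ i j : Fin ℓ, (i : ℕ) + 1 = (j : ℕ) → edges i ≠ edges j

variable {G : Multigraph V E}

/-- The reverse of an arc. -/
def Arc.reverse {ℓ : ℕ} (A : G.Arc ℓ) : G.Arc ℓ where
  verts i := A.verts i.rev
  edges i := A.edges i.rev
  inc_eq i := by
    show G.inc (A.edges i.rev) = s(A.verts i.castSucc.rev, A.verts i.succ.rev)
    rw [Fin.rev_castSucc, Fin.rev_succ, A.inc_eq i.rev, Sym2.eq_swap]
  nb i j hij h := by
    refine A.nb j.rev i.rev ?_ (h.symm)
    have hi := i.isLt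
    have hj := j.isLt
    simp only [Fin.val_rev]
    omega

lemma Arc.reverse_reverse {ℓ : ℕ} (A : G.Arc ℓ) : A.reverse.reverse = A := by
  ext i
  · show A.verts i.rev.rev = A.verts i
    rw [Fin.rev_rev]
  · show A.edges i.rev.rev = A.edges i
    rw [Fin.rev_rev]

/-- The length-`ℓ` prefix of an `(ℓ+1)`-arc. -/
def Arc.init {ℓ : ℕ} (A : G.Arc (ℓ + 1)) : G.Arc ℓ where
  verts i := A.verts i.castSucc
  edges i := A.edges i.castSucc
  inc_eq i := by
    show G.inc (A.edges i.castSucc) = s(A.verts i.castSucc.castSucc, A.verts i.succ.castSucc)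
    rw [A.inc_eq i.castSucc, Fin.succ_castSucc]
  nb i j hij h := A.nb i.castSucc j.castSucc (by simpa using hij) h

/-- The length-`ℓ` suffix of an `(ℓ+1)`-arc. -/
def Arc.tail {ℓ : ℕ} (A : G.Arc (ℓ + 1)) : G.Arc ℓ where
  verts i := A.verts i.succ
  edges i := A.edges i.succ
  inc_eq i := by
    show G.inc (A.edges i.succ) = s(A.verts i.castSucc.succ, A.verts i.succ.succ)
    rw [A.inc_eq i.succ, Fin.succ_castSucc]
  nb i j hij h := A.nb i.succ j.succ (by simpa using hij) h

lemma Arc.reverse_init {ℓ : ℕ} (A : G.Arc (ℓ + 1)) : A.reverse.init = A.tail.reverse := by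
  ext i
  · show A.verts (Fin.castSucc i).rev = A.verts i.rev.succ
    rw [Fin.rev_castSucc]
  · show A.edges (Fin.castSucc i).rev = A.edges i.rev.succ
    rw [Fin.rev_castSucc]

lemma Arc.reverse_tail {ℓ : ℕ} (A : G.Arc (ℓ + 1)) : A.reverse.tail = A.init.reverse := by
  ext i
  · show A.verts (Fin.succ i).rev = A.verts i.rev.castSucc
    rw [Fin.rev_succ]
  · show A.edges (Fin.succ i).rev = A.edges i.rev.castSucc
    rw [Fin.rev_succ]

/-- The reversal relation on arcs. -/
def LinkRel (G : Multigraph V E) {ℓ : ℕ} (A B : G.Arc ℓ) : Prop := B = A.reverse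

/-- An `ℓ`-link: an `ℓ`-arc up to reversal. -/
def Link (G : Multigraph V E) (ℓ : ℕ) : Type := Quot (G.LinkRel (ℓ := ℓ))

/-- The `ℓ`-link determined by an `ℓ`-arc. -/
def Link.mk {ℓ : ℕ} (A : G.Arc ℓ) : G.Link ℓ := Quot.mk (G.LinkRel) A

lemma Link.mk_reverse {ℓ : ℕ} (A : G.Arc ℓ) : (Link.mk A.reverse : G.Link ℓ) = Link.mk A :=
  (Quot.sound (show G.LinkRel A A.reverse from rfl)).symm

/-- The unordered pair of `ℓ`-links that are the two length-`ℓ` subsequences of an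
`(ℓ+1)`-link. -/
def linkEnds (G : Multigraph V E) {ℓ : ℕ} : G.Link (ℓ + 1) → Sym2 (G.Link ℓ) :=
  Quot.lift (fun A => s(Link.mk A.init, Link.mk A.tail)) (by
    rintro A B rfl
    show s(Link.mk A.init, Link.mk A.tail) = s(Link.mk A.reverse.init, Link.mk A.reverse.tail)
    rw [Arc.reverse_init, Arc.reverse_tail, Link.mk_reverse, Link.mk_reverse, Sym2.eq_swap])

/-- The `ℓ`-link graph of `G`: vertices are the `ℓ`-links, and for each
`(ℓ+1)`-link there is one edge joining its two length-`ℓ` subsequences. -/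
def linkGraph (G : Multigraph V E) (ℓ : ℕ) : Multigraph (G.Link ℓ) (G.Link (ℓ + 1)) where
  inc := G.linkEnds

/-- The set of edges used by an arc. -/
def Arc.edgeSet {ℓ : ℕ} (A : G.Arc ℓ) : Set E := Set.range A.edges

/-- The set of vertices used by an arc. -/
def Arc.vertSet {ℓ : ℕ} (A : G.Arc ℓ) : Set V := Set.range A.verts

lemma Arc.edgeSet_reverse {ℓ : ℕ} (A : G.Arc ℓ) : A.reverse.edgeSet = A.edgeSet := by
  ext e
  constructor
  · rintro ⟨i, rfl⟩; exact ⟨i.rev, rfl⟩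
  · rintro ⟨i, rfl⟩; exact ⟨i.rev, by show A.edges i.rev.rev = _; rw [Fin.rev_rev]⟩

lemma Arc.vertSet_reverse {ℓ : ℕ} (A : G.Arc ℓ) : A.reverse.vertSet = A.vertSet := by
  ext v
  constructor
  · rintro ⟨i, rfl⟩; exact ⟨i.rev, rfl⟩
  · rintro ⟨i, rfl⟩; exact ⟨i.rev, by show A.verts i.rev.rev = _; rw [Fin.rev_rev]⟩

/-- The set of edges used by a link. -/
def Link.edgeSet {ℓ : ℕ} : G.Link ℓ → Set E :=
  Quot.lift Arc.edgeSet (by rintro A B rfl; exact (Arc.edgeSet_reverse A).symm)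

/-- The set of vertices used by a link. -/
def Link.vertSet {ℓ : ℕ} : G.Link ℓ → Set V :=
  Quot.lift Arc.vertSet (by rintro A B rfl; exact (Arc.vertSet_reverse A).symm)

lemma Arc.tail_init_comm {ℓ : ℕ} (A : G.Arc (ℓ + 2)) : A.tail.init = A.init.tail := by
  ext i
  · show A.verts (Fin.castSucc i).succ = A.verts (Fin.succ i).castSucc
    rw [Fin.succ_castSucc]
  · show A.edges (Fin.castSucc i).succ = A.edges (Fin.succ i).castSucc
    rw [Fin.succ_castSucc]

/-- The middle `ℓ`-segment of an `(ℓ+2)`-arc, obtained by deleting the first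
and last edge. -/
def Arc.mid2 {ℓ : ℕ} (A : G.Arc (ℓ + 2)) : G.Arc ℓ := A.tail.init

lemma Arc.mid2_reverse {ℓ : ℕ} (A : G.Arc (ℓ + 2)) : A.reverse.mid2 = A.mid2.reverse := by
  show A.reverse.tail.init = A.tail.init.reverse
  rw [Arc.reverse_tail, Arc.reverse_init, Arc.tail_init_comm]

/-- The middle `ℓ`-segment of an `(ℓ+2)`-link. -/
def Link.mid2 {ℓ : ℕ} : G.Link (ℓ + 2) → G.Link ℓ :=
  Quot.lift (fun A => Link.mk A.mid2) (by
    rintro A B rfl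
    show Link.mk A.mid2 = Link.mk A.reverse.mid2
    rw [Arc.mid2_reverse, Link.mk_reverse])

/-- The middle unit of an arc: its middle vertex if its length is even, and its
middle edge if its length is odd. -/
def Arc.midUnit {ℓ : ℕ} (A : G.Arc ℓ) : V ⊕ E :=
  if h : Even ℓ then Sum.inl (A.verts ⟨ℓ / 2, by omega⟩)
  else Sum.inr (A.edges ⟨ℓ / 2, by
    have : ℓ % 2 = 1 := Nat.not_even_iff.mp h
    omega⟩)

lemma Arc.midUnit_reverse {ℓ : ℕ} (A : G.Arc ℓ) : A.reverse.midUnit = A.midUnit := by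
  by_cases h : Even ℓ
  · rw [Arc.midUnit, Arc.midUnit, dif_pos h, dif_pos h]
    have hk : ℓ % 2 = 0 := Nat.even_iff.mp h
    congr 1
    show A.verts (⟨ℓ / 2, _⟩ : Fin (ℓ + 1)).rev = A.verts _
    congr 1
    ext
    rw [Fin.val_rev]
    show ℓ + 1 - (ℓ / 2 + 1) = ℓ / 2
    omega
  · rw [Arc.midUnit, Arc.midUnit, dif_neg h, dif_neg h]
    have hk : ℓ % 2 = 1 := Nat.not_even_iff.mp h
    congr 1
    show A.edges (⟨ℓ / 2, _⟩ : Fin ℓ).rev = A.edges _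
    congr 1
    ext
    rw [Fin.val_rev]
    show ℓ - (ℓ / 2 + 1) = ℓ / 2
    omega

/-- The middle unit of a link: its middle vertex (even length) or middle edge
(odd length). -/
def Link.midUnit {ℓ : ℕ} : G.Link ℓ → V ⊕ E :=
  Quot.lift Arc.midUnit (by rintro A B rfl; exact (Arc.midUnit_reverse A).symm)

/-- `G` has a (nonnull) subgraph of minimum degree at least `d`. -/
def HasMinDegSubgraph (G : Multigraph V E) (d : ℕ) : Prop :=
  ∃ (V' : Set V) (E' : Set E), V'.Nonempty ∧ (∀ e ∈ E', ∀ v ∈ G.inc e, v ∈ V') ∧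
    ∀ v ∈ V', d ≤ Nat.card {e : E // e ∈ E' ∧ v ∈ G.inc e}

/-- The degeneracy of `G`: the maximum over subgraphs of the minimum degree. -/
noncomputable def degeneracy (G : Multigraph V E) : ℕ := sSup {d | G.HasMinDegSubgraph d}

/-- The edge-chromatic number of a multigraph: the least `t` such that the edges
can be `t`-coloured with edges sharing an endpoint getting distinct colours. -/
noncomputable def edgeChromaticNumber (G : Multigraph V E) : ℕ :=
  sInf {t | ∃ c : E → Fin t, ∀ e f : E, e ≠ f → (∃ v, v ∈ G.inc e ∧ v ∈ G.inc f) → c e ≠ c f}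

/-- The complete bipartite multigraph `K_{n,m}` (one edge for each pair). -/
def completeBipartiteMG (n m : ℕ) : Multigraph (Fin n ⊕ Fin m) (Fin n × Fin m) :=
  ⟨fun p => s(Sum.inl p.1, Sum.inr p.2)⟩

end Multigraph

/-- `H` contains a complete minor on `t` branch sets: `t` pairwise disjoint
nonempty connected subsets of vertices with an edge between every two of them. -/
def SimpleGraph.HasKMinor {W : Type} (H : SimpleGraph W) (t : ℕ) : Prop :=
  ∃ B : Fin t → Set W,
    (∀ i, (B i).Nonempty) ∧
    (∀ i, ((H.induce (B i)).Connected)) ∧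
    (∀ i j, i ≠ j → Disjoint (B i) (B j)) ∧
    (∀ i j, i ≠ j → ∃ u ∈ B i, ∃ v ∈ B j, H.Adj u v)


/-!
In `K_{n,m}` every walk alternates between the two sides, and a non-backtracking walk ending at a
vertex of degree `d` continues in exactly `d - 1` ways. Two steps therefore always multiply the
number of walks by `(n - 1)(m - 1)`, so there are `2nm((n - 1)(m - 1))^t` walks of length
`2t + 1`. A walk of odd length is never its own reverse (its middle edge would be a loop), so the
links are exactly half as many. The `(ℓ + 1)`-links containing the link of a walk `A` correspond
to the one-step continuations of `A` and of its reverse; since `A` starts and ends on different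
sides there are `(n - 1) + (m - 1)` of them.
-/

theorem Nat.card_eq_sum_card_fiber {α β : Type*} [Finite α] [Fintype β] (f : α → β) :
    Nat.card α = ∑ b, Nat.card {a // f a = b} := by
  rw [← Nat.card_sigma, Nat.card_congr (Equiv.sigmaFiberEquiv f)]

theorem Nat.card_eq_card_mul_of_card_fiber {α β : Type*} [Finite α] [Finite β] (f : α → β)
    {c : ℕ} (h : ∀ b, Nat.card {a // f a = b} = c) : Nat.card α = Nat.card β * c := by
  have := Fintype.ofFinite β
  simp [Nat.card_eq_sum_card_fiber f, h, Nat.card_eq_fintype_card]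

namespace Multigraph

variable {V E : Type} {G : Multigraph V E} {k : ℕ}

instance [Finite V] [Finite E] (ℓ : ℕ) : Finite (G.Arc ℓ) :=
  Finite.of_injective (fun A => (A.verts, A.edges)) fun A B h => by
    simp only [Prod.mk.injEq] at h
    exact Arc.ext h.1 h.2

instance [Finite V] [Finite E] (ℓ : ℕ) : Finite (G.Link ℓ) :=
  Finite.of_surjective Link.mk Quot.exists_rep

theorem Link.exists_mk (L : G.Link k) : ∃ A, Link.mk A = L := Quot.exists_rep L

theorem Link.mk_eq_mk_iff {A B : G.Arc k} : Link.mk A = Link.mk B ↔ A = B ∨ A = B.reverse := by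
  refine ⟨fun h => ?_, ?_⟩
  · have hgen := Quot.eqvGen_exact h
    clear h
    induction hgen with
    | rel x y hxy => exact .inr (by rw [hxy, Arc.reverse_reverse])
    | refl x => exact .inl rfl
    | symm x y _ ih => rcases ih with rfl | rfl <;> simp [Arc.reverse_reverse]
    | trans x y z _ _ ih₁ ih₂ =>
      rcases ih₁ with rfl | rfl <;> rcases ih₂ with rfl | rfl <;> simp [Arc.reverse_reverse]
  · rintro (rfl | rfl)
    exacts [rfl, Link.mk_reverse B]

theorem Arc.init_ne_tail (B : G.Arc (k + 2)) : B.init ≠ B.tail := fun h =>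
  B.nb 0 1 rfl (congrArg (fun A : G.Arc (k + 1) => A.edges 0) h)

/-- Otherwise the two middle edges of `B` would coincide. -/
theorem Arc.init_ne_reverse_tail {t : ℕ} (B : G.Arc (2 * t + 2)) : B.init ≠ B.tail.reverse :=
  fun h => B.nb ⟨t, by omega⟩ ⟨t + 1, by omega⟩ rfl <| by
    have := congrArg (fun A : G.Arc (2 * t + 1) => A.edges ⟨t, by omega⟩) h
    simpa [Arc.init, Arc.tail, Arc.reverse, Fin.rev, show 2 * t - t = t by omega]
      using this

theorem Link.mk_init_ne_mk_tail {t : ℕ} (B : G.Arc (2 * t + 2)) :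
    Link.mk B.init ≠ Link.mk B.tail := by
  rw [Ne, Link.mk_eq_mk_iff, not_or]
  exact ⟨B.init_ne_tail, B.init_ne_reverse_tail⟩

/-- An arc of odd length equal to its reverse runs along its middle edge in both directions,
so that edge is a loop. -/
theorem Arc.ne_reverse (hG : G.Loopless) {t : ℕ} (A : G.Arc (2 * t + 1)) : A ≠ A.reverse := by
  intro h
  have hmid := congrArg (fun B : G.Arc (2 * t + 1) => B.verts ⟨t + 1, by omega⟩) h
  simp only [Arc.reverse, Fin.rev, show 2 * t + 1 + 1 - (t + 1 + 1) = t by omega] at hmid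
  apply hG (A.edges ⟨t, by omega⟩)
  rw [A.inc_eq, Sym2.mk_isDiag_iff]
  exact hmid.symm

def Arc.snoc (A : G.Arc k) (e : E) (w : V) (he : G.inc e = s(A.verts (Fin.last k), w))
    (hne : ∀ i : Fin k, (i : ℕ) + 1 = k → A.edges i ≠ e) : G.Arc (k + 1) where
  verts := Fin.snoc A.verts w
  edges := Fin.snoc A.edges e
  inc_eq i := by
    induction i using Fin.lastCases with
    | last => simpa using he
    | cast i =>
      rw [Fin.succ_castSucc, Fin.snoc_castSucc, Fin.snoc_castSucc, Fin.snoc_castSucc, A.inc_eq]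
  nb i j hij := by
    induction j using Fin.lastCases with
    | last =>
      induction i using Fin.lastCases with
      | last => simp at hij
      | cast i => simpa using hne i (by simpa using hij)
    | cast j =>
      induction i using Fin.lastCases with
      | last => simp at hij; omega
      | cast i => simpa using A.nb i j (by simpa using hij)

theorem Arc.init_snoc (A : G.Arc k) (e : E) (w : V)
    (he : G.inc e = s(A.verts (Fin.last k), w))
    (hne : ∀ i : Fin k, (i : ℕ) + 1 = k → A.edges i ≠ e) :
    (A.snoc e w he hne).init = A := by
  ext i <;> simp [Arc.init, Arc.snoc]

def Arc.ExtensionEdge (A : G.Arc k) (e : E) : Prop :=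
  A.verts (Fin.last k) ∈ G.inc e ∧ ∀ i : Fin k, (i : ℕ) + 1 = k → A.edges i ≠ e

noncomputable def Arc.initFiberEquiv (A : G.Arc k) :
    {B : G.Arc (k + 1) // B.init = A} ≃ {e // A.ExtensionEdge e} where
  toFun B := ⟨B.1.edges (Fin.last k), by
    obtain ⟨B, rfl⟩ := B
    refine ⟨?_, fun i hi => B.nb i.castSucc (Fin.last k) hi⟩
    rw [B.inc_eq]
    exact Sym2.mem_mk_left _ _⟩
  invFun e := ⟨A.snoc e.1 _ (Sym2.other_spec e.2.1).symm e.2.2, A.init_snoc ..⟩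
  left_inv B := by
    obtain ⟨B, rfl⟩ := B
    apply Subtype.ext
    ext i
    · have hw (h : B.init.verts (Fin.last k) ∈ G.inc (B.edges (Fin.last k))) :
          Sym2.Mem.other h = B.verts (Fin.last (k + 1)) :=
        Sym2.congr_right.mp ((Sym2.other_spec h).trans (B.inc_eq _))
      simp only [Arc.snoc, hw]
      exact congrFun (Fin.snoc_init_self B.verts) i
    · exact congrFun (Fin.snoc_init_self B.edges) i
  right_inv e := by simp [Arc.snoc]

theorem Arc.card_initFiber_zero (A : G.Arc 0) :
    Nat.card {B : G.Arc 1 // B.init = A} = G.degree (A.verts 0) :=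
  Nat.card_congr <| A.initFiberEquiv.trans <| Equiv.subtypeEquivRight fun _ => by
    simp [Arc.ExtensionEdge, Fin.last]

theorem Arc.card_initFiber_succ [Finite E] (A : G.Arc (k + 1)) :
    Nat.card {B : G.Arc (k + 2) // B.init = A} = G.degree (A.verts (Fin.last (k + 1))) - 1 := by
  have hlast : A.edges (Fin.last k) ∈ {e | A.verts (Fin.last (k + 1)) ∈ G.inc e} := by
    simp [A.inc_eq]
  have hext (e : E) : A.ExtensionEdge e ↔
      e ∈ {e | A.verts (Fin.last (k + 1)) ∈ G.inc e} \ {A.edges (Fin.last k)} := by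
    refine and_congr_right fun _ => ⟨fun h he => h (Fin.last k) rfl (he.symm), fun h i hi => ?_⟩
    rw [show i = Fin.last k from Fin.ext (by simpa using hi)]
    exact fun he => h he.symm
  rw [Nat.card_congr (A.initFiberEquiv.trans (Equiv.subtypeEquivRight hext)), Nat.card_coe_set_eq,
    Set.ncard_sdiff_singleton_of_mem hlast, ← Nat.card_coe_set_eq]
  rfl

def Arc.zeroEquiv : G.Arc 0 ≃ V where
  toFun A := A.verts 0
  invFun v := ⟨fun _ => v, Fin.elim0, fun i => i.elim0, fun i => i.elim0⟩
  left_inv A := by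
    ext i
    · rw [Fin.fin_one_eq_zero i]
    · exact i.elim0
  right_inv _ := rfl

theorem card_arc_one [Fintype V] [Finite E] : Nat.card (G.Arc 1) = ∑ v, G.degree v := by
  have := Fintype.ofFinite (G.Arc 0)
  rw [Nat.card_eq_sum_card_fiber (Arc.init : G.Arc 1 → G.Arc 0)]
  exact Fintype.sum_equiv Arc.zeroEquiv _ _ fun A => A.card_initFiber_zero

theorem linkGraph_degree_mk {t : ℕ} (A : G.Arc (2 * t + 1)) :
    (G.linkGraph (2 * t + 1)).degree (Link.mk A)
      = Nat.card {B : G.Arc (2 * t + 2) // Link.mk B.init = Link.mk A} := by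
  symm
  refine Nat.card_eq_of_bijective
    (fun B => ⟨Link.mk B.1, Sym2.mem_iff.mpr (.inl B.2.symm)⟩) ⟨?_, ?_⟩
  · rintro ⟨B, hB⟩ ⟨B', hB'⟩ h
    rcases Link.mk_eq_mk_iff.mp (congrArg Subtype.val h) with h | rfl
    · exact Subtype.ext h
    · refine absurd ?_ (Link.mk_init_ne_mk_tail B')
      rw [hB', ← hB, Arc.reverse_init, Link.mk_reverse]
  · rintro ⟨M, hM⟩
    obtain ⟨C, rfl⟩ := M.exists_mk
    rcases Sym2.mem_iff.mp hM with h | h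
    · exact ⟨⟨C, h.symm⟩, rfl⟩
    · refine ⟨⟨C.reverse, ?_⟩, Subtype.ext (Link.mk_reverse C)⟩
      rw [Arc.reverse_init, Link.mk_reverse, h]

theorem linkGraph_degree_mk_of_loopless [Finite V] [Finite E] (hG : G.Loopless) {t : ℕ}
    (A : G.Arc (2 * t + 1)) :
    (G.linkGraph (2 * t + 1)).degree (Link.mk A)
      = Nat.card {B : G.Arc (2 * t + 2) // B.init = A}
        + Nat.card {B : G.Arc (2 * t + 2) // B.init = A.reverse} := by
  classical
  have hdisj : Disjoint (fun B : G.Arc (2 * t + 2) => B.init = A) (·.init = A.reverse) :=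
    fun _ hA hA' B hB => A.ne_reverse hG ((hA B hB).symm.trans (hA' B hB))
  rw [linkGraph_degree_mk, ← Nat.card_sum,
    Nat.card_congr ((Equiv.subtypeEquivRight fun _ => Link.mk_eq_mk_iff).trans
      (subtypeOrEquiv _ _ hdisj))]

theorem card_arc_eq_two_mul_card_link [Finite V] [Finite E] (hG : G.Loopless) (t : ℕ) :
    Nat.card (G.Arc (2 * t + 1)) = 2 * Nat.card (G.Link (2 * t + 1)) := by
  rw [Nat.card_eq_card_mul_of_card_fiber Link.mk (c := 2), mul_comm]
  intro L
  obtain ⟨A, rfl⟩ := L.exists_mk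
  calc Nat.card {B // Link.mk B = Link.mk A} = Nat.card ({A, A.reverse} : Set (G.Arc _)) :=
        Nat.card_congr (Equiv.subtypeEquivRight fun _ => Link.mk_eq_mk_iff)
    _ = 2 := by rw [Nat.card_coe_set_eq, Set.ncard_pair (A.ne_reverse hG)]

section CompleteBipartite

variable {n m : ℕ}

theorem completeBipartiteMG_loopless : (completeBipartiteMG n m).Loopless := fun _ => by
  simp [completeBipartiteMG]

theorem degree_completeBipartiteMG (v : Fin n ⊕ Fin m) :
    (completeBipartiteMG n m).degree v = if v.isLeft then m else n := by
  rcases v with a | b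
  · calc _ = Nat.card ({a' // a' = a} × Fin m) :=
          Nat.card_congr <| (Equiv.subtypeEquivRight fun _ => by
            simp [completeBipartiteMG, eq_comm]).trans Equiv.prodSubtypeFstEquivSubtypeProd
      _ = m := by simp
  · calc _ = Nat.card ({b' // b' = b} × Fin n) :=
          Nat.card_congr <| (Equiv.subtypeEquiv (Equiv.prodComm _ _) fun _ => by
            simp [completeBipartiteMG, eq_comm]).trans Equiv.prodSubtypeFstEquivSubtypeProd
      _ = n := by simp

theorem isLeft_eq_not_of_inc_eq {e : Fin n × Fin m} {u v : Fin n ⊕ Fin m}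
    (h : (completeBipartiteMG n m).inc e = s(u, v)) : u.isLeft = !v.isLeft := by
  rcases Sym2.eq_iff.mp h with ⟨rfl, rfl⟩ | ⟨rfl, rfl⟩ <;> rfl

theorem Arc.isLeft_verts_succ (A : (completeBipartiteMG n m).Arc k) (i : Fin k) :
    (A.verts i.succ).isLeft = !(A.verts i.castSucc).isLeft := by
  simp [isLeft_eq_not_of_inc_eq (A.inc_eq i)]

theorem Arc.isLeft_verts_eq_iff (A : (completeBipartiteMG n m).Arc k) (i : Fin (k + 1)) :
    (A.verts i).isLeft = (A.verts 0).isLeft ↔ Even (i : ℕ) := by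
  induction i using Fin.induction with
  | zero => simp
  | succ i ih =>
    rw [Fin.val_castSucc] at ih
    rw [A.isLeft_verts_succ, Fin.val_succ, Nat.even_add_one, ← ih]
    cases (A.verts i.castSucc).isLeft <;> cases (A.verts 0).isLeft <;> simp

theorem Arc.isLeft_verts_last (A : (completeBipartiteMG n m).Arc (2 * k + 1)) :
    (A.verts (Fin.last _)).isLeft = !(A.verts 0).isLeft := by
  have h := A.isLeft_verts_eq_iff (Fin.last _)
  simp only [Fin.val_last, Nat.not_even_bit1, iff_false] at h
  exact Bool.eq_not.mpr h

theorem card_arc_one_completeBipartiteMG :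
    Nat.card ((completeBipartiteMG n m).Arc 1) = 2 * (n * m) := by
  simp [card_arc_one, Fintype.sum_sum_type, degree_completeBipartiteMG]
  ring

theorem Arc.card_initFiber_completeBipartiteMG (A : (completeBipartiteMG n m).Arc (k + 1)) :
    Nat.card {B : (completeBipartiteMG n m).Arc (k + 2) // B.init = A}
      = (if (A.verts (Fin.last _)).isLeft then m else n) - 1 := by
  rw [card_initFiber_succ, degree_completeBipartiteMG]

theorem Arc.card_initInitFiber_completeBipartiteMG (A : (completeBipartiteMG n m).Arc (k + 1)) :
    Nat.card {C : (completeBipartiteMG n m).Arc (k + 3) // C.init.init = A}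
      = (n - 1) * (m - 1) := by
  have hfib (B : {B : (completeBipartiteMG n m).Arc (k + 2) // B.init = A}) :
      Nat.card {C : (completeBipartiteMG n m).Arc (k + 3) // C.init = B.1}
        = (if !(A.verts (Fin.last _)).isLeft then m else n) - 1 := by
    obtain ⟨B, rfl⟩ := B
    rw [card_initFiber_completeBipartiteMG, ← Fin.succ_last, isLeft_verts_succ]
    rfl
  rw [Nat.card_eq_card_mul_of_card_fiber (fun C => (⟨C.1.init, C.2⟩ : {B // B.init = A}))
    fun B => (Nat.card_congr <| (Equiv.subtypeEquivRight fun _ => Subtype.ext_iff).trans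
      (Equiv.subtypeSubtypeEquivSubtype fun h => (congrArg Arc.init h).trans B.2)).trans (hfib B),
    card_initFiber_completeBipartiteMG]
  cases (A.verts (Fin.last _)).isLeft <;> simp [mul_comm]

theorem card_arc_completeBipartiteMG (t : ℕ) :
    Nat.card ((completeBipartiteMG n m).Arc (2 * t + 1))
      = 2 * (n * m) * ((n - 1) * (m - 1)) ^ t := by
  induction t with
  | zero => simpa using card_arc_one_completeBipartiteMG
  | succ t ih =>
    change Nat.card ((completeBipartiteMG n m).Arc (2 * t + 1 + 2)) = _
    rw [Nat.card_eq_card_mul_of_card_fiber (fun C => C.init.init)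
      Arc.card_initInitFiber_completeBipartiteMG, ih, pow_succ, mul_assoc]

theorem card_link_completeBipartiteMG (t : ℕ) :
    Nat.card ((completeBipartiteMG n m).Link (2 * t + 1)) = n * m * ((n - 1) * (m - 1)) ^ t := by
  have h := card_arc_eq_two_mul_card_link (completeBipartiteMG_loopless (n := n) (m := m)) t
  rw [card_arc_completeBipartiteMG, mul_assoc] at h
  exact (Nat.eq_of_mul_eq_mul_left two_pos h).symm

theorem linkGraph_degree_completeBipartiteMG {t : ℕ}
    (L : (completeBipartiteMG n m).Link (2 * t + 1)) :
    ((completeBipartiteMG n m).linkGraph (2 * t + 1)).degree L = n + m - 2 := by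
  obtain ⟨A, rfl⟩ := L.exists_mk
  have hn : 0 < n := (A.edges 0).1.pos
  have hm : 0 < m := (A.edges 0).2.pos
  have hrev : A.reverse.verts (Fin.last _) = A.verts 0 := by simp [Arc.reverse]
  rw [linkGraph_degree_mk_of_loopless completeBipartiteMG_loopless,
    Arc.card_initFiber_completeBipartiteMG, Arc.card_initFiber_completeBipartiteMG, hrev,
    A.isLeft_verts_last]
  cases (A.verts 0).isLeft <;> simp <;> omega

end CompleteBipartite

end Multigraph

theorem link_count_completeBipartite_general (n m ℓ : ℕ) (hodd : Odd ℓ) :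
    Nat.card ((Multigraph.completeBipartiteMG n m).Link ℓ)
      = n * m * ((n - 1) * (m - 1)) ^ ((ℓ - 1) / 2) ∧
    ∀ L : (Multigraph.completeBipartiteMG n m).Link ℓ,
      ((Multigraph.completeBipartiteMG n m).linkGraph ℓ).degree L = n + m - 2 := by
  obtain ⟨t, rfl⟩ := hodd
  rw [show (2 * t + 1 - 1) / 2 = t by omega]
  exact ⟨Multigraph.card_link_completeBipartiteMG t,
    Multigraph.linkGraph_degree_completeBipartiteMG⟩

/-- For `n, m ≥ 2` and odd `ℓ ≥ 1`, the number of `ℓ`-links of `K_{n,m}`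
is `n m ((n-1)(m-1))^((ℓ-1)/2)`, and each `ℓ`-link lies in exactly `n+m-2` of the
`(ℓ+1)`-links, i.e. the `ℓ`-link graph of `K_{n,m}` is `(n+m-2)`-regular. -/
theorem link_count_completeBipartite (n m ℓ : ℕ) (hn : 2 ≤ n) (hm : 2 ≤ m) (hodd : Odd ℓ) :
    Nat.card ((Multigraph.completeBipartiteMG n m).Link ℓ)
      = n * m * ((n - 1) * (m - 1)) ^ ((ℓ - 1) / 2) ∧
    ∀ L : (Multigraph.completeBipartiteMG n m).Link ℓ,
      ((Multigraph.completeBipartiteMG n m).linkGraph ℓ).degree L = n + m - 2 :=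
  link_count_completeBipartite_general n m ℓ hodd
end

section
/- Let G be a finite loopless multigraph with edge-chromatic number χ′ and let ℓ ≥ 1 be odd. Then χ(L_ℓ(G)) ≤ min{χ′, ⌊(2/3)^{(ℓ−1)/2}(χ′−3)⌋ + 3}. -/
/-!
Colouring an `ℓ`-link by the colour of its middle edge in an optimal edge colouring is proper,
since the two ends of an `(ℓ+1)`-link have consecutive middle edges; this gives `χ'`.

For the other bound, the three `ℓ`-sublinks of an `(ℓ+2)`-link form a walk `a, b, c` in `L_ℓ(G)`,
and two adjacent `(ℓ+2)`-links give overlapping walks `a, b, c` and `b, c, d`. Recolouring the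
`(ℓ+2)`-link by a function of the colours of `a, b, c` keeps three colours and squeezes every
further triple of colours into two, the third colour of a triple choosing whichever of the two
slots its neighbours leave free. This turns `n + 3` colours into `⌊2n/3⌋ + 3`, and iterating it
`(ℓ-1)/2` times from `L_1(G)` gives the second bound.
-/

lemma Nat.mul_div_pow_div_le (a b m x : ℕ) :
    a * (a ^ m * x / b ^ m) / b ≤ a ^ (m + 1) * x / b ^ (m + 1) :=
  calc a * (a ^ m * x / b ^ m) / b
      ≤ a * (a ^ m * x) / b ^ m / b := Nat.div_le_div_right (Nat.mul_div_le_mul_div_assoc _ _ _)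
    _ = a ^ (m + 1) * x / b ^ (m + 1) := by
      rw [Nat.div_div_eq_div_mul, pow_succ, pow_succ, mul_comm _ a, mul_assoc]

/-- A rule turning a proper colouring of the middles of three-term walks with colours `< N` into one
with colours `< M`: a rigid colour `b` becomes `g b`, and any other colour `b` becomes the first of
`p₁ b`, `p₂ b`, `s b` not already taken by a rigid neighbour. -/
structure RecolouringScheme (N M : ℕ) where
  rigid : ℕ → Prop
  g : ℕ → ℕ
  p₁ : ℕ → ℕ
  p₂ : ℕ → ℕ
  s : ℕ → ℕ
  injOn_g : Set.InjOn g {b | rigid b}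
  p₁_ne_p₂ : ∀ b, ¬ rigid b → p₁ b ≠ p₂ b
  s_ne_p₁ : ∀ b, ¬ rigid b → s b ≠ p₁ b
  s_ne_p₂ : ∀ b, ¬ rigid b → s b ≠ p₂ b
  pair_disjoint : ∀ b b', ¬ rigid b → ¬ rigid b' → b ≠ b' →
    p₁ b ≠ p₁ b' ∧ p₁ b ≠ p₂ b' ∧ p₂ b ≠ p₁ b' ∧ p₂ b ≠ p₂ b'
  g_lt : ∀ b < N, rigid b → g b < M
  p₁_lt : ∀ b < N, ¬ rigid b → p₁ b < M
  p₂_lt : ∀ b < N, ¬ rigid b → p₂ b < M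
  s_lt : ∀ b < N, ¬ rigid b → s b < M

namespace RecolouringScheme

variable {N M : ℕ} (S : RecolouringScheme N M)

def Claims (a x : ℕ) : Prop := S.rigid a ∧ S.g a = x

open Classical in
noncomputable def recolour (a b c : ℕ) : ℕ :=
  if S.rigid b then S.g b
  else if ¬ (S.Claims a (S.p₁ b) ∨ S.Claims c (S.p₁ b)) then S.p₁ b
  else if ¬ (S.Claims a (S.p₂ b) ∨ S.Claims c (S.p₂ b)) then S.p₂ b
  else S.s b

lemma recolour_comm (a b c : ℕ) : S.recolour a b c = S.recolour c b a := by
  unfold recolour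
  split_ifs <;> first | rfl | tauto

lemma recolour_lt {b : ℕ} (hb : b < N) (a c : ℕ) : S.recolour a b c < M := by
  unfold recolour
  split_ifs with h
  exacts [S.g_lt b hb h, S.s_lt b hb h, S.p₂_lt b hb h, S.p₁_lt b hb h]

lemma recolour_of_rigid {b : ℕ} (hb : S.rigid b) (a c : ℕ) : S.recolour a b c = S.g b :=
  if_pos hb

/-- When both `p₁ b` and `p₂ b` are taken, they are taken by the two neighbours, and `s b` differs
from both. -/
lemma recolour_ne_g_left {a b : ℕ} (hb : ¬ S.rigid b) (ha : S.rigid a) (c : ℕ) :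
    S.recolour a b c ≠ S.g a := by
  have := S.p₁_ne_p₂ b hb
  have := S.s_ne_p₁ b hb
  have := S.s_ne_p₂ b hb
  unfold recolour Claims
  split_ifs <;> grind

lemma recolour_mem_pair {b c : ℕ} (hb : ¬ S.rigid b) (hc : ¬ S.rigid c) (a : ℕ) :
    S.recolour a b c = S.p₁ b ∨ S.recolour a b c = S.p₂ b := by
  have := S.p₁_ne_p₂ b hb
  unfold recolour Claims
  split_ifs <;> grind

lemma recolour_ne {b c : ℕ} (hbc : b ≠ c) (a d : ℕ) : S.recolour a b c ≠ S.recolour b c d := by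
  by_cases hb : S.rigid b <;> by_cases hc : S.rigid c
  · rw [S.recolour_of_rigid hb, S.recolour_of_rigid hc]
    exact fun h => hbc (S.injOn_g hb hc h)
  · rw [S.recolour_of_rigid hb]
    exact (S.recolour_ne_g_left hc hb d).symm
  · rw [S.recolour_of_rigid hc, S.recolour_comm a b c]
    exact S.recolour_ne_g_left hb hc a
  · have := S.pair_disjoint b c hb hc hbc
    rw [S.recolour_comm b c d]
    rcases S.recolour_mem_pair hb hc a with h | h <;>
      rcases S.recolour_mem_pair hc hb d with h' | h' <;> grind

/-- Colours `0, 1, 2` are kept; the other colours are grouped into triples `3q+3, 3q+4, 3q+5`, of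
which the first two are sent to `2q+3, 2q+4` and the third is flexible between them (spare `0`).
The last colour `n+2` is flexible between `0, 1` (spare `2`), which absorbs an incomplete last
triple. -/
def twoThirds (n : ℕ) : RecolouringScheme (n + 3) (2 * n / 3 + 3) where
  rigid b := b < 3 ∨ (b ≠ n + 2 ∧ (b - 3) % 3 ≠ 2)
  g b := if b < 3 then b else 3 + 2 * ((b - 3) / 3) + (b - 3) % 3
  p₁ b := if b = n + 2 then 0 else 3 + 2 * ((b - 3) / 3)
  p₂ b := if b = n + 2 then 1 else 4 + 2 * ((b - 3) / 3)
  s b := if b = n + 2 then 2 else 0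
  injOn_g a ha b hb := by simp only [Set.mem_ofPred_eq] at ha hb; dsimp only; split_ifs <;> omega
  p₁_ne_p₂ b _ := by split_ifs <;> omega
  s_ne_p₁ b _ := by split_ifs <;> omega
  s_ne_p₂ b _ := by split_ifs <;> omega
  pair_disjoint b b' hb hb' _ := by split_ifs <;> omega
  g_lt b _ _ := by split_ifs <;> omega
  p₁_lt b _ _ := by split_ifs <;> omega
  p₂_lt b _ _ := by split_ifs <;> omega
  s_lt b _ _ := by split_ifs <;> omega

end RecolouringScheme

namespace Multigraph

variable {V E : Type} {G : Multigraph V E}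

section Links

variable {ℓ : ℕ}

@[simp] lemma Arc.reverse_edges (A : G.Arc ℓ) (i : Fin ℓ) : A.reverse.edges i = A.edges i.rev :=
  rfl

@[simp] lemma Arc.init_edges (A : G.Arc (ℓ + 1)) (i : Fin ℓ) :
    A.init.edges i = A.edges i.castSucc :=
  rfl

lemma Link.eq_or_eq_reverse_of_mk_eq {A B : G.Arc ℓ} (h : Link.mk A = Link.mk B) :
    B = A ∨ B = A.reverse := by
  replace h := Quot.eqvGen_exact h
  induction h with
  | rel A B hAB => exact Or.inr hAB
  | refl => exact Or.inl rfl
  | symm A B _ ih =>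
    rcases ih with rfl | rfl
    exacts [Or.inl rfl, Or.inr A.reverse_reverse.symm]
  | trans A B C _ _ ihAB ihBC =>
    rcases ihAB with rfl | rfl <;> rcases ihBC with rfl | rfl
    exacts [Or.inl rfl, Or.inr rfl, Or.inr rfl, Or.inl A.reverse_reverse]

/-- For odd `ℓ` the two ends of an `(ℓ+1)`-link differ, so it is not a loop of `L_ℓ(G)`:
both `S.tail = S.init` and `S.tail = S.init.reverse` would repeat two consecutive edges. -/
lemma Arc.mk_init_ne_mk_tail (hℓ : Odd ℓ) (S : G.Arc (ℓ + 1)) :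
    Link.mk S.init ≠ Link.mk S.tail := by
  obtain ⟨k, rfl⟩ := hℓ
  intro h
  rcases Link.eq_or_eq_reverse_of_mk_eq h with h | h
  · have h₀ := congrFun (congrArg Arc.edges h) ⟨0, by omega⟩
    exact S.nb ⟨0, by omega⟩ ⟨1, by omega⟩ rfl h₀.symm
  · have hk := congrFun (congrArg Arc.edges h) ⟨k, by omega⟩
    refine S.nb ⟨k, by omega⟩ ⟨k + 1, by omega⟩ rfl (hk.trans ?_).symm
    simp only [Arc.reverse_edges, Arc.init_edges]
    congr 1
    ext
    simp only [Fin.val_castSucc, Fin.val_rev]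
    omega

lemma linkGraph_adj_mk_init_mk_tail (hℓ : Odd ℓ) (S : G.Arc (ℓ + 1)) :
    (G.linkGraph ℓ).toSimple.Adj (Link.mk S.init) (Link.mk S.tail) :=
  ⟨S.mk_init_ne_mk_tail hℓ, Link.mk S, rfl⟩

lemma colorable_linkGraph_of_arcColoring {n : ℕ} (f : G.Arc ℓ → Fin n)
    (hrev : ∀ A, f A.reverse = f A) (hne : ∀ R : G.Arc (ℓ + 1), f R.init ≠ f R.tail) :
    (G.linkGraph ℓ).toSimple.Colorable n := by
  refine ⟨.mk (Quot.lift f fun A B hAB => hAB ▸ (hrev A).symm) ?_⟩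
  rintro L₁ L₂ ⟨-, R, hR⟩
  induction R using Quot.ind with
  | _ R =>
    rcases Sym2.eq_iff.1 hR with ⟨rfl, rfl⟩ | ⟨rfl, rfl⟩
    exacts [hne R, (hne R).symm]

end Links

section EdgeColoring

def IsProperEdgeColoring {α : Type*} (G : Multigraph V E) (c : E → α) : Prop :=
  ∀ e f : E, e ≠ f → (∃ v, v ∈ G.inc e ∧ v ∈ G.inc f) → c e ≠ c f

lemma exists_isProperEdgeColoring [Finite E] (G : Multigraph V E) :
    ∃ c : E → Fin G.edgeChromaticNumber, G.IsProperEdgeColoring c := by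
  refine Nat.sInf_mem (s := {t | ∃ c : E → Fin t, G.IsProperEdgeColoring c}) ?_
  obtain ⟨n, ⟨eqv⟩⟩ := Finite.exists_equiv_fin E
  exact ⟨n, eqv, fun e f hef _ h => hef (eqv.injective h)⟩

def Arc.midEdge {k : ℕ} (A : G.Arc (2 * k + 1)) : E := A.edges ⟨k, by omega⟩

lemma Arc.midEdge_reverse {k : ℕ} (A : G.Arc (2 * k + 1)) : A.reverse.midEdge = A.midEdge := by
  simp only [Arc.midEdge, Arc.reverse_edges]
  congr 1
  ext
  simp only [Fin.val_rev]
  omega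

lemma colorable_linkGraph_of_isProperEdgeColoring {ℓ n : ℕ} (hℓ : Odd ℓ) {c : E → Fin n}
    (hc : G.IsProperEdgeColoring c) : (G.linkGraph ℓ).toSimple.Colorable n := by
  obtain ⟨k, rfl⟩ := hℓ
  refine colorable_linkGraph_of_arcColoring (c ∘ Arc.midEdge)
    (fun A => congrArg c A.midEdge_reverse) fun R => hc _ _ ?_ ⟨R.verts ⟨k + 1, by omega⟩, ?_, ?_⟩
  · exact R.nb ⟨k, by omega⟩ ⟨k + 1, by omega⟩ rfl
  · exact (R.inc_eq ⟨k, by omega⟩).symm ▸ Sym2.mem_mk_right _ _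
  · exact (R.inc_eq ⟨k + 1, by omega⟩).symm ▸ Sym2.mem_mk_left _ _

end EdgeColoring

lemma colorable_linkGraph_add_two {ℓ N M : ℕ} (hℓ : Odd ℓ) (S : RecolouringScheme N M)
    (h : (G.linkGraph ℓ).toSimple.Colorable N) : (G.linkGraph (ℓ + 2)).toSimple.Colorable M := by
  obtain ⟨C⟩ := h
  let φ (A : G.Arc ℓ) : ℕ := C (Link.mk A)
  refine colorable_linkGraph_of_arcColoring
    (fun A => ⟨S.recolour (φ A.init.init) (φ A.mid2) (φ A.tail.tail), S.recolour_lt (C _).2 _ _⟩)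
    (fun A => ?_) (fun R => ?_)
  · have hinit : A.reverse.init.init = A.tail.tail.reverse := by
      rw [Arc.reverse_init, Arc.reverse_init]
    have htail : A.reverse.tail.tail = A.init.init.reverse := by
      rw [Arc.reverse_tail, Arc.reverse_tail]
    ext
    simp only [φ, hinit, htail, Arc.mid2_reverse, Link.mk_reverse]
    exact S.recolour_comm _ _ _
  · have hadj (T : G.Arc (ℓ + 1)) : φ T.init ≠ φ T.tail := fun h =>
      C.valid (linkGraph_adj_mk_init_mk_tail hℓ T) (Fin.ext h)
    have h₁ : R.tail.init.init = R.init.mid2 := congrArg Arc.init R.tail_init_comm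
    have h₂ : R.tail.mid2 = R.init.tail.tail := by
      rw [Arc.mid2, R.tail.tail_init_comm, R.tail_init_comm]
    have hne : φ R.init.mid2 ≠ φ R.tail.mid2 := by
      rw [h₂]
      exact hadj R.init.tail
    intro h
    refine S.recolour_ne hne (φ R.init.init.init) (φ R.tail.tail.tail) ?_
    simpa only [h₁, h₂] using congrArg Fin.val h

lemma colorable_linkGraph_add_two_mul {ℓ n : ℕ} (hℓ : Odd ℓ)
    (h : (G.linkGraph ℓ).toSimple.Colorable (n + 3)) :
    ∀ m, (G.linkGraph (ℓ + 2 * m)).toSimple.Colorable (2 ^ m * n / 3 ^ m + 3)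
  | 0 => by simpa using h
  | m + 1 => by
    have hstep := colorable_linkGraph_add_two (hℓ.add_even (even_two_mul m))
      (RecolouringScheme.twoThirds _) (colorable_linkGraph_add_two_mul hℓ h m)
    rw [mul_add_one, ← add_assoc]
    exact hstep.mono (Nat.add_le_add_right (Nat.mul_div_pow_div_le 2 3 m n) 3)

end Multigraph

theorem chromatic_linkGraph_odd_general {V E : Type} [Finite E] (G : Multigraph V E)
    (ℓ : ℕ) (hodd : Odd ℓ) (c' : ℕ)
    (hc' : G.edgeChromaticNumber = c') :
    ((G.linkGraph ℓ).toSimple).chromaticNumber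
      ≤ ((min c' (2 ^ ((ℓ - 1) / 2) * (c' - 3) / 3 ^ ((ℓ - 1) / 2) + 3) : ℕ) : ℕ∞) := by
  obtain ⟨c, hc⟩ := G.exists_isProperEdgeColoring
  subst hc'
  obtain ⟨k, rfl⟩ := hodd
  rw [show (2 * k + 1 - 1) / 2 = k by omega, Nat.mono_cast.map_min]
  refine le_min (G.colorable_linkGraph_of_isProperEdgeColoring ⟨k, rfl⟩ hc).chromaticNumber_le ?_
  have h₁ : (G.linkGraph 1).toSimple.Colorable (G.edgeChromaticNumber - 3 + 3) :=
    (G.colorable_linkGraph_of_isProperEdgeColoring odd_one hc).mono (by omega)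
  have h₂ := G.colorable_linkGraph_add_two_mul odd_one h₁ k
  rw [add_comm 1] at h₂
  exact h₂.chromaticNumber_le

/-- For a finite loopless multigraph `G` with edge-chromatic number `c'`
and odd `ℓ ≥ 1`, `χ(L_ℓ(G)) ≤ min {c', ⌊(2/3)^((ℓ-1)/2) (c'-3)⌋ + 3}`. -/
theorem chromatic_linkGraph_odd {V E : Type} [Finite V] [Finite E] (G : Multigraph V E)
    (hG : G.Loopless) (ℓ : ℕ) (hodd : Odd ℓ) (c' : ℕ)
    (hc' : G.edgeChromaticNumber = c') :
    ((G.linkGraph ℓ).toSimple).chromaticNumber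
      ≤ ((min c' (2 ^ ((ℓ - 1) / 2) * (c' - 3) / 3 ^ ((ℓ - 1) / 2) + 3) : ℕ) : ℕ∞) :=
  chromatic_linkGraph_odd_general G ℓ hodd c' hc'
end
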